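/- Let R be an A_∞-algebra over a cdga k and M a symmetric R-R-bimodule. Then the projection ε: HH_k(R, M) → M onto Hochschild degree 0 is a map of cochain complexes (hence of k-modules). -/
import Mathlib


/-! Core framework for (shifted) A_∞-algebras over a (flattened) cdga `k`.

We encode a cochain complex of `k`-modules as a `k`-module equipped with a `ℤ`-grading by
submodules; the differential is part of the A_∞-data (`μ_1`).  In the shifted convention all
structure maps `μ_n : (sR)^{⊗n} → sR` have degree `1`, and the defining relations carry Koszul
signs `(-1)^{|x_1| + ⋯ + |x_r|}` when a structure map is moved past the first `r` inputs; we
state all relations on homogeneous elements, with explicit signs. -/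

noncomputable section

/-- `(-1)^e` for `e : ℤ`. -/
def sgn (e : ℤ) : ℤ := if e % 2 = 0 then 1 else -1

variable {k : Type} [CommRing k]

/-- The tuple obtained from `x : Fin n → R` by replacing the `s` entries in positions
`r, …, r+s-1` by the single entry `μ_s (x_r, …, x_{r+s-1})`. -/
def muInsert {R : Type} [AddCommGroup R] [Module k R]
    (mu : ∀ m : ℕ, MultilinearMap k (fun _ : Fin m => R) R)
    (n r s : ℕ) (h : r + s ≤ n) (x : Fin n → R) : Fin (n - s + 1) → R :=
  fun j =>
    if hj : (j : ℕ) < r then x ⟨j, by omega⟩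
    else if hj' : (j : ℕ) = r then
      mu s (fun t : Fin s => x ⟨r + (t : ℕ), by have := t.2; omega⟩)
    else x ⟨(j : ℕ) + s - 1, by have := j.2; omega⟩

/-- The first `r` entries of a tuple. -/
def firstPart {R : Type} (n r : ℕ) (h : r ≤ n) (x : Fin n → R) : Fin r → R :=
  fun i => x ⟨i, by have := i.2; omega⟩

/-- The last `n - r` entries of a tuple. -/
def lastPart {R : Type} (n r : ℕ) (h : r ≤ n) (x : Fin n → R) : Fin (n - r) → R :=
  fun j => x ⟨r + (j : ℕ), by have := j.2; omega⟩

/-- The sign `(-1)^{|x_1| + ⋯ + |x_r|}` for inputs of degrees `d`. -/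
def sgnPrefix {n : ℕ} (d : Fin n → ℤ) (r : ℕ) : ℤ :=
  sgn (∑ i ∈ Finset.univ.filter (fun i : Fin n => (i : ℕ) < r), d i)

variable (k) in
/-- An A_∞-algebra over `k` in the shifted convention: the underlying object `R` plays the role
of `sR`; all structure maps have (cohomological) degree `1`. -/
structure AInfty where
  R : Type
  [acg : AddCommGroup R]
  [mod : Module k R]
  /-- the grading of `sR` -/
  gr : ℤ → Submodule k R
  decomp : DirectSum.Decomposition gr
  /-- the structure maps `μ_n : (sR)^{⊗n} → sR`, `n ≥ 1`; `μ_1` is the differential -/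
  mu : ∀ m : ℕ, MultilinearMap k (fun _ : Fin m => R) R
  mu_zero : mu 0 = 0
  mu_grade : ∀ (m : ℕ) (d : Fin m → ℤ) (x : Fin m → R), (∀ i, x i ∈ gr (d i)) →
    mu m x ∈ gr (1 + ∑ i, d i)
  /-- the A_∞-relations `∑ ± μ_{r+1+t} ∘ (id^{⊗r} ⊗ μ_s ⊗ id^{⊗t}) = 0` on homogeneous inputs -/
  rel : ∀ (m : ℕ) (d : Fin m → ℤ) (x : Fin m → R), (∀ i, x i ∈ gr (d i)) →
    (∑ r ∈ Finset.range (m + 1), ∑ s ∈ Finset.range (m + 1),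
      if h : r + s ≤ m then
        sgnPrefix d r • mu (m - s + 1) (muInsert mu m r s h x)
      else 0) = 0

attribute [instance] AInfty.acg AInfty.mod

variable (k) in
/-- A left module over an A_∞-algebra: structure maps
`μ^M_l : (sR)^{⊗l} ⊗ M → M` of degree `1` (`μ^M_0` is the differential of `M`), satisfying the
module relations on homogeneous inputs. -/
structure AInftyMod (A : AInfty k) where
  M : Type
  [acg : AddCommGroup M]
  [mod : Module k M]
  gr : ℤ → Submodule k M
  decomp : DirectSum.Decomposition gr
  act : ∀ l : ℕ, MultilinearMap k (fun _ : Fin l => A.R) (Module.End k M)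
  act_grade : ∀ (l : ℕ) (d : Fin l → ℤ) (x : Fin l → A.R), (∀ i, x i ∈ A.gr (d i)) →
    ∀ (e : ℤ) (m : M), m ∈ gr e → act l x m ∈ gr (1 + ∑ i, d i + e)
  rel : ∀ (l : ℕ) (d : Fin l → ℤ) (x : Fin l → A.R), (∀ i, x i ∈ A.gr (d i)) → ∀ m : M,
    (∑ r ∈ Finset.range (l + 1), ∑ s ∈ Finset.range (l + 1),
      if h : r + s ≤ l then
        sgnPrefix d r • act (l - s + 1) (muInsert A.mu l r s h x) m
      else 0)
    + (∑ r ∈ Finset.range (l + 1),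
      if h : r ≤ l then
        sgnPrefix d r • act r (firstPart l r h x) (act (l - r) (lastPart l r h x) m)
      else 0) = 0

attribute [instance] AInftyMod.acg AInftyMod.mod

end
noncomputable section

open scoped TensorProduct DirectSum

variable {k : Type} [CommRing k]

/-- The slice `x_{a+1}, …, x_{a+l}` of a tuple. -/
def seg {R : Type} (n a l : ℕ) (h : a + l ≤ n) (x : Fin n → R) : Fin l → R :=
  fun t => x ⟨a + (t : ℕ), by have := t.2; omega⟩

variable (k) in
/-- A bimodule over an A_∞-algebra `A` (over itself on both sides), with structure maps
`μ^M_{l,r} : (sR)^{⊗l} ⊗ M ⊗ (sR)^{⊗r} → M` of degree `1`, satisfying the bimodule relations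
on homogeneous inputs (with Koszul signs). -/
structure AInftyBimod (A : AInfty k) where
  M : Type
  [acg : AddCommGroup M]
  [mod : Module k M]
  gr : ℤ → Submodule k M
  decomp : DirectSum.Decomposition gr
  actLR : ∀ l r : ℕ,
    MultilinearMap k (fun _ : Fin l => A.R)
      (MultilinearMap k (fun _ : Fin r => A.R) (Module.End k M))
  act_grade : ∀ (l r : ℕ) (dl : Fin l → ℤ) (dr : Fin r → ℤ)
    (x : Fin l → A.R) (y : Fin r → A.R),
    (∀ i, x i ∈ A.gr (dl i)) → (∀ i, y i ∈ A.gr (dr i)) →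
    ∀ (e : ℤ) (m : M), m ∈ gr e →
      actLR l r x y m ∈ gr (1 + ∑ i, dl i + ∑ i, dr i + e)
  rel : ∀ (l r : ℕ) (dl : Fin l → ℤ) (dr : Fin r → ℤ)
    (x : Fin l → A.R) (y : Fin r → A.R),
    (∀ i, x i ∈ A.gr (dl i)) → (∀ i, y i ∈ A.gr (dr i)) →
    ∀ (e : ℤ) (m : M), m ∈ gr e →
    -- insert `μ^R` among the left inputs
    (∑ a ∈ Finset.range (l + 1), ∑ s ∈ Finset.range (l + 1),
      if h : a + s ≤ l then
        sgnPrefix dl a • actLR (l - s + 1) r (muInsert A.mu l a s h x) y m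
      else 0)
    -- compose two bimodule structure maps
    + (∑ l₁ ∈ Finset.range (l + 1), ∑ r₁ ∈ Finset.range (r + 1),
      if h : l₁ ≤ l ∧ r₁ ≤ r then
        sgnPrefix dl l₁ •
          actLR l₁ (r - r₁) (seg l 0 l₁ (by omega) x) (seg r r₁ (r - r₁) (by omega) y)
            (actLR (l - l₁) r₁ (seg l l₁ (l - l₁) (by omega) x)
              (seg r 0 r₁ (by omega) y) m)
      else 0)
    -- insert `μ^R` among the right inputs
    + (∑ a ∈ Finset.range (r + 1), ∑ s ∈ Finset.range (r + 1),
      if h : a + s ≤ r then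
        sgn ((∑ i, dl i) + e + ∑ i ∈ Finset.univ.filter (fun i : Fin r => (i : ℕ) < a), dr i) •
          actLR l (r - s + 1) x (muInsert A.mu r a s h y) m
      else 0) = 0

attribute [instance] AInftyBimod.acg AInftyBimod.mod

variable {A : AInfty k}

/-- The underlying `k`-module of the Hochschild complex `HH_k(R, M) = ⊕_n M ⊗ (sR)^{⊗n}`. -/
abbrev HHcx (B : AInftyBimod k A) : Type :=
  ⨁ n : ℕ, (B.M ⊗[k] (⨂[k] (_ : Fin n), A.R))

/-- The inclusion of the `n`-th Hochschild summand. -/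
def HHincl (B : AInftyBimod k A) (n : ℕ) :
    (B.M ⊗[k] (⨂[k] (_ : Fin n), A.R)) →ₗ[k] HHcx B :=
  DirectSum.lof k ℕ (fun n => B.M ⊗[k] (⨂[k] (_ : Fin n), A.R)) n

/-- `D` is the Hochschild differential of `HH_k(R, M)`: on a homogeneous chain
`m ⊗ x_1 ⊗ ⋯ ⊗ x_n` it is given by
`∑ id^{⊗1+r} ⊗ μ^R_s ⊗ id^{⊗t} + ∑ (μ^M_{l,r} ⊗ id^{⊗s}) ∘ t^{∘l}_{1+n}` with Koszul signs. -/
def IsHHDiff (B : AInftyBimod k A) (D : HHcx B →ₗ[k] HHcx B) : Prop :=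
  ∀ (n : ℕ) (d : Fin n → ℤ) (x : Fin n → A.R), (∀ i, x i ∈ A.gr (d i)) →
  ∀ (e : ℤ) (m : B.M), m ∈ B.gr e →
    D (HHincl B n (m ⊗ₜ[k] PiTensorProduct.tprod k x)) =
      (∑ r ∈ Finset.range (n + 1), ∑ s ∈ Finset.range (n + 1),
        if h : r + s ≤ n then
          sgn (e + ∑ i ∈ Finset.univ.filter (fun i : Fin n => (i : ℕ) < r), d i) •
            HHincl B (n - s + 1)
              (m ⊗ₜ[k] PiTensorProduct.tprod k (muInsert A.mu n r s h x))
        else 0)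
      + (∑ l ∈ Finset.range (n + 1), ∑ r ∈ Finset.range (n + 1),
        if h : l + r ≤ n then
          sgn ((∑ j ∈ Finset.univ.filter (fun j : Fin n => n - l ≤ (j : ℕ)), d j) *
               (e + ∑ j ∈ Finset.univ.filter (fun j : Fin n => (j : ℕ) < n - l), d j)) •
            HHincl B (n - l - r)
              ((B.actLR l r (seg n (n - l) l (by omega) x) (seg n 0 r (by omega) x) m)
                ⊗ₜ[k] PiTensorProduct.tprod k (seg n r (n - l - r) (by omega) x))
        else 0)

/-- The bimodule `M` is symmetric: the structure maps vanish on Koszul-signed sums of cyclic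
permutations of `M ⊗ (sR)^{⊗n}`. -/
def IsSymmBimod (B : AInftyBimod k A) : Prop :=
  ∀ (n : ℕ), 1 ≤ n → ∀ (d : Fin n → ℤ) (x : Fin n → A.R), (∀ i, x i ∈ A.gr (d i)) →
  ∀ (e : ℤ) (m : B.M), m ∈ B.gr e →
    (∑ i ∈ Finset.range (n + 1),
      if h : i ≤ n then
        sgn ((∑ j ∈ Finset.univ.filter (fun j : Fin n => n - i ≤ (j : ℕ)), d j) *
             (e + ∑ j ∈ Finset.univ.filter (fun j : Fin n => (j : ℕ) < n - i), d j)) •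
          B.actLR i (n - i) (seg n (n - i) i (by omega) x) (seg n 0 (n - i) (by omega) x) m
      else 0) = 0

/-- The projection `HH_k(R, M) → M` onto Hochschild degree `0`. -/
def HHproj (B : AInftyBimod k A) : HHcx B →ₗ[k] B.M :=
  (TensorProduct.rid k B.M).toLinearMap ∘ₗ
    (LinearMap.lTensor B.M (PiTensorProduct.isEmptyEquiv (Fin 0)).toLinearMap) ∘ₗ
      (DirectSum.component k ℕ (fun n => B.M ⊗[k] (⨂[k] (_ : Fin n), A.R)) 0)

end

/-!
STATEMENT 15: For an A_∞-algebra `R` over `k` and a symmetric `R`-`R`-bimodule `M`, the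
projection `ε : HH_k(R, M) → M` onto Hochschild degree 0 is a map of cochain complexes.
-/

noncomputable section
open scoped TensorProduct DirectSum

namespace HHaux

variable {k : Type} [CommRing k] {A : AInfty k} (B : AInftyBimod k A)

lemma proj_incl_ne (n : ℕ) (hn : n ≠ 0) (z : B.M ⊗[k] (⨂[k] (_ : Fin n), A.R)) :
    HHproj B (HHincl B n z) = 0 := by
  have h0 : DirectSum.component k ℕ (fun n => B.M ⊗[k] (⨂[k] (_ : Fin n), A.R)) 0
      (HHincl B n z) = 0 := by
    rw [HHincl, DirectSum.component.of, dif_neg hn]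
  simp [HHproj, h0]

lemma proj_incl_zero' (N : ℕ) (hN : N = 0) (m : B.M) (z : Fin N → A.R) :
    HHproj B (HHincl B N (m ⊗ₜ[k] PiTensorProduct.tprod k z)) = m := by
  subst hN
  have h0 : DirectSum.component k ℕ (fun n => B.M ⊗[k] (⨂[k] (_ : Fin n), A.R)) 0
      (HHincl B 0 (m ⊗ₜ[k] PiTensorProduct.tprod k z)) =
        m ⊗ₜ[k] PiTensorProduct.tprod k z := by
    rw [HHincl, DirectSum.component.lof_self]
  simp [HHproj, h0]

lemma proj_smul_incl (c : ℤ) (N : ℕ) (m : B.M) (z : Fin N → A.R) :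
    HHproj B (c • HHincl B N (m ⊗ₜ[k] PiTensorProduct.tprod k z)) =
      if N = 0 then c • m else 0 := by
  by_cases hN : N = 0
  · rw [if_pos hN, map_zsmul, proj_incl_zero' B N hN]
  · rw [if_neg hN, map_zsmul, proj_incl_ne B N hN, smul_zero]

lemma key (hsymm : IsSymmBimod B) (D : HHcx B →ₗ[k] HHcx B) (hD : IsHHDiff B D)
    (n : ℕ) (d : Fin n → ℤ) (x : Fin n → A.R) (hx : ∀ i, x i ∈ A.gr (d i))
    (e : ℤ) (m : B.M) (hm : m ∈ B.gr e) :
    HHproj B (D (HHincl B n (m ⊗ₜ[k] PiTensorProduct.tprod k x))) =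
      B.actLR 0 0 Fin.elim0 Fin.elim0
        (HHproj B (HHincl B n (m ⊗ₜ[k] PiTensorProduct.tprod k x))) := by
  rw [hD n d x hx e m hm, map_add, map_sum, map_sum]
  have first :
      (∑ r ∈ Finset.range (n + 1), HHproj B (∑ s ∈ Finset.range (n + 1),
        if h : r + s ≤ n then
          sgn (e + ∑ i ∈ Finset.univ.filter (fun i : Fin n => (i : ℕ) < r), d i) •
            HHincl B (n - s + 1)
              (m ⊗ₜ[k] PiTensorProduct.tprod k (muInsert A.mu n r s h x))
        else 0)) = 0 := by
    refine Finset.sum_eq_zero fun r _ => ?_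
    rw [map_sum]
    refine Finset.sum_eq_zero fun s hs => ?_
    rw [apply_dite (HHproj B)]
    split_ifs with h
    · rw [proj_smul_incl, if_neg (by omega)]
    · exact map_zero _
  rw [first, zero_add]
  have second :
      (∑ l ∈ Finset.range (n + 1), HHproj B (∑ r ∈ Finset.range (n + 1),
        if h : l + r ≤ n then
          sgn ((∑ j ∈ Finset.univ.filter (fun j : Fin n => n - l ≤ (j : ℕ)), d j) *
               (e + ∑ j ∈ Finset.univ.filter (fun j : Fin n => (j : ℕ) < n - l), d j)) •
            HHincl B (n - l - r)
              ((B.actLR l r (seg n (n - l) l (by omega) x) (seg n 0 r (by omega) x) m)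
                ⊗ₜ[k] PiTensorProduct.tprod k (seg n r (n - l - r) (by omega) x))
        else 0)) =
      ∑ l ∈ Finset.range (n + 1),
        (if h : l ≤ n then
          sgn ((∑ j ∈ Finset.univ.filter (fun j : Fin n => n - l ≤ (j : ℕ)), d j) *
               (e + ∑ j ∈ Finset.univ.filter (fun j : Fin n => (j : ℕ) < n - l), d j)) •
            B.actLR l (n - l) (seg n (n - l) l (by omega) x) (seg n 0 (n - l) (by omega) x) m
        else 0) := by
    refine Finset.sum_congr rfl fun l hl => ?_
    have hln : l ≤ n := by simp at hl; omega
    rw [map_sum]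
    rw [Finset.sum_eq_single (n - l)]
    · rw [dif_pos (by omega : l + (n - l) ≤ n), proj_smul_incl,
        if_pos (by omega : n - l - (n - l) = 0), dif_pos hln]
    · intro r hr hrne
      rw [apply_dite (HHproj B)]
      split_ifs with h
      · rw [proj_smul_incl, if_neg (by omega)]
      · exact map_zero _
    · intro habs
      exact absurd (Finset.mem_range.mpr (by omega)) habs
  rw [second]
  rcases Nat.eq_zero_or_pos n with hn | hn
  · subst hn
    rw [Finset.sum_range_one, dif_pos (le_refl 0)]
    have hfin : (Finset.univ.filter (fun j : Fin 0 => 0 - 0 ≤ (j : ℕ))) = ∅ := by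
      exact Finset.eq_empty_of_isEmpty _
    have hfin2 : (Finset.univ.filter (fun j : Fin 0 => (j : ℕ) < 0 - 0)) = ∅ := by
      exact Finset.eq_empty_of_isEmpty _
    rw [hfin, hfin2]
    simp only [Finset.sum_empty]
    have hsgn : sgn ((0 : ℤ) * (e + 0)) = 1 := by simp [sgn]
    rw [hsgn, one_smul, proj_incl_zero' B 0 rfl]
    congr 1
    exact congr_arg₂ (fun (a b : Fin 0 → A.R) => B.actLR 0 0 a b)
      (funext fun i => Fin.elim0 i) (funext fun i => Fin.elim0 i)
  · rw [proj_incl_ne B n (by omega), map_zero]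
    exact hsymm n hn d x hx e m hm

end HHaux

end

theorem HHproj_chainMap {k : Type} [CommRing k] (A : AInfty k) (B : AInftyBimod k A)
    (hsymm : IsSymmBimod B) (D : HHcx B →ₗ[k] HHcx B) (hD : IsHHDiff B D) :
    HHproj B ∘ₗ D =
      (B.actLR 0 0 Fin.elim0 Fin.elim0 : B.M →ₗ[k] B.M) ∘ₗ HHproj B := by
  classical
  apply DirectSum.linearMap_ext
  intro n
  apply TensorProduct.ext'
  intro m z
  induction z using PiTensorProduct.induction_on with
  | smul_tprod c x =>
    simp only [LinearMap.comp_apply, TensorProduct.tmul_smul, map_smul]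
    show (c • HHproj B (D (HHincl B n (m ⊗ₜ[k] PiTensorProduct.tprod k x)))) =
      c • (B.actLR 0 0 Fin.elim0 Fin.elim0)
        (HHproj B (HHincl B n (m ⊗ₜ[k] PiTensorProduct.tprod k x)))
    congr 1
    -- decompose m and x into homogeneous components
    haveI := B.decomp
    haveI := A.decomp
    have hm : m = ∑ e ∈ (DirectSum.decompose B.gr m).support,
        ((DirectSum.decompose B.gr m) e : B.M) :=
      (DirectSum.sum_support_decompose B.gr m).symm
    have hx : x = fun i => ∑ di ∈ (DirectSum.decompose A.gr (x i)).support,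
        ((DirectSum.decompose A.gr (x i)) di : A.R) :=
      funext fun i => (DirectSum.sum_support_decompose A.gr (x i)).symm
    rw [hm, hx, MultilinearMap.map_sum_finset, TensorProduct.sum_tmul]
    simp only [TensorProduct.tmul_sum]
    simp only [map_sum]
    refine Finset.sum_congr rfl fun e he => ?_
    refine Finset.sum_congr rfl fun p hp => ?_
    exact HHaux.key B hsymm D hD n (fun i => p i)
      (fun i => ((DirectSum.decompose A.gr (x i)) (p i) : A.R))
      (fun i => SetLike.coe_mem _) e _ (SetLike.coe_mem _)
  | add y z hy hz =>
    simp only [LinearMap.comp_apply, TensorProduct.tmul_add, map_add] at hy hz ⊢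
    rw [hy, hz]
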